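/- Under hypotheses (F1) and (F2), the limit of f(G⁻¹(t)) / (t · g(G⁻¹(t))) as t → +∞ equals +∞. -/

import Mathlib

/-!
Since `f' t / t ^ (β - 2)` has a positive limit and `β > 2`, `f'` tends to `+∞`, so `f` grows
superlinearly: `f s / s → +∞`. As `√(1/6) ≤ g ≤ 1`, `G` is an increasing bijection with `G s ≤ s`
for `s ≥ 0`, so `s := G⁻¹ t ≥ t` for `t > 0`. Hence `t g(s) ≤ s` and `f s / (t g(s)) ≥ f s / s`.
-/
open Real Filter Topology

/-- The piecewise function `g` from the paper: `g(t) = sqrt(1 - κ t^2)` for `|t| < sqrt(1/(3κ))`,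
and `g(t) = 1/(3 sqrt(2κ) |t|) + sqrt(1/6)` for `|t| ≥ sqrt(1/(3κ))`; in particular `g` is even. -/
noncomputable def gfun (κ : ℝ) (t : ℝ) : ℝ :=
  if |t| < Real.sqrt (1 / (3 * κ)) then Real.sqrt (1 - κ * t ^ 2)
  else 1 / (3 * Real.sqrt (2 * κ) * |t|) + Real.sqrt (1 / 6)

/-- `G(t) = ∫ s in [0,t], g(s) ds`. -/
noncomputable def Gfun (κ : ℝ) (t : ℝ) : ℝ := ∫ s in (0:ℝ)..t, gfun κ s

/-- `G⁻¹`, the inverse function of `G`. -/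
noncomputable def Ginv (κ : ℝ) : ℝ → ℝ := Function.invFun (Gfun κ)

open MeasureTheory

lemma tendsto_atTop_of_tendsto_div_rpow {u : ℝ → ℝ} {γ L : ℝ} (hγ : 0 < γ) (hL : 0 < L)
    (h : Tendsto (fun t => u t / t ^ γ) atTop (𝓝 L)) : Tendsto u atTop atTop := by
  refine (h.pos_mul_atTop hL (tendsto_rpow_atTop hγ)).congr' ?_
  filter_upwards [eventually_gt_atTop 0] with t ht
  exact div_mul_cancel₀ _ (rpow_pos_of_pos ht γ).ne'

lemma tendsto_div_self_atTop_of_tendsto_deriv {f : ℝ → ℝ}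
    (hdiff : ∀ᶠ x in atTop, DifferentiableAt ℝ f x) (hderiv : Tendsto (deriv f) atTop atTop) :
    Tendsto (fun x => f x / x) atTop atTop := by
  refine tendsto_atTop.2 fun C => ?_
  obtain ⟨T, hT⟩ := eventually_atTop.1 (hdiff.and (hderiv.eventually_ge_atTop (C + 1)))
  have hslope : ∀ x ≥ T, (C + 1) * (x - T) ≤ f x - f T := by
    refine fun x hx =>
      (convex_Ici T).mul_sub_le_image_sub_of_le_deriv ?_ ?_ ?_ T Set.self_mem_Ici x hx hx
    · exact fun y hy => (hT y hy).1.continuousAt.continuousWithinAt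
    · exact fun y hy => (hT y (interior_subset hy)).1.differentiableWithinAt
    · exact fun y hy => (hT y (interior_subset hy)).2
  set K := f T - (C + 1) * T
  filter_upwards [eventually_ge_atTop T, eventually_ge_atTop (|K| + 1)] with x hxT hxK
  have hx : 0 < x := by linarith [abs_nonneg K]
  rw [le_div_iff₀ hx]
  nlinarith [hslope x hxT, neg_abs_le K]

section Primitive

variable {g : ℝ → ℝ} {c a b : ℝ}

lemma primitive_sub_le (hint : ∀ a b, IntervalIntegrable g volume a b) (hg : ∀ t, g t ≤ 1)
    (hab : a ≤ b) : (∫ s in 0..b, g s) - ∫ s in 0..a, g s ≤ b - a := by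
  rw [intervalIntegral.integral_interval_sub_left (hint 0 b) (hint 0 a)]
  simpa using intervalIntegral.integral_mono_on hab (hint a b) intervalIntegrable_const
    fun t _ => hg t

lemma mul_sub_le_primitive_sub (hint : ∀ a b, IntervalIntegrable g volume a b)
    (hg : ∀ t, c ≤ g t) (hab : a ≤ b) : c * (b - a) ≤ (∫ s in 0..b, g s) - ∫ s in 0..a, g s := by
  rw [intervalIntegral.integral_interval_sub_left (hint 0 b) (hint 0 a)]
  simpa [mul_comm] using intervalIntegral.integral_mono_on hab intervalIntegrable_const
    (hint a b) fun t _ => hg t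

lemma surjective_primitive (hint : ∀ a b, IntervalIntegrable g volume a b) (hc : 0 < c)
    (hg : ∀ t, c ≤ g t) : Function.Surjective fun x => ∫ s in 0..x, g s := by
  refine (intervalIntegral.continuous_primitive hint 0).surjective ?_ ?_
  · refine tendsto_atTop_mono' _ ?_ (tendsto_id.const_mul_atTop hc)
    filter_upwards [eventually_ge_atTop 0] with x hx
    simpa using mul_sub_le_primitive_sub hint hg hx
  · refine tendsto_atBot_mono' _ ?_ (tendsto_id.const_mul_atBot hc)
    filter_upwards [eventually_le_atBot 0] with x hx
    simpa using mul_sub_le_primitive_sub hint hg hx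

lemma le_of_primitive_eq (hint : ∀ a b, IntervalIntegrable g volume a b)
    (hg0 : ∀ t, 0 ≤ g t) (hg1 : ∀ t, g t ≤ 1) {s t : ℝ} (ht : 0 < t)
    (hst : ∫ u in 0..s, g u = t) : t ≤ s := by
  rcases le_or_gt 0 s with hs | hs
  · simpa [hst] using primitive_sub_le hint hg1 hs
  · have := mul_sub_le_primitive_sub hint hg0 hs.le
    simp only [intervalIntegral.integral_same, hst] at this
    linarith

end Primitive

lemma sqrt_one_sixth_le_gfun {κ : ℝ} (hκ : 0 < κ) (t : ℝ) : √(1 / 6) ≤ gfun κ t := by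
  unfold gfun
  split_ifs with h
  · have ht : |t| ^ 2 * (3 * κ) < 1 :=
      (lt_div_iff₀ (by positivity)).1 ((lt_sqrt (abs_nonneg t)).1 h)
    exact sqrt_le_sqrt (by nlinarith [sq_abs t])
  · have : 0 ≤ 1 / (3 * √(2 * κ) * |t|) := by positivity
    linarith

lemma gfun_pos {κ : ℝ} (hκ : 0 < κ) (t : ℝ) : 0 < gfun κ t :=
  (sqrt_pos.2 (by norm_num)).trans_le (sqrt_one_sixth_le_gfun hκ t)

lemma gfun_le_one {κ : ℝ} (hκ : 0 < κ) (t : ℝ) : gfun κ t ≤ 1 := by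
  unfold gfun
  split_ifs with h
  · exact sqrt_le_one.2 (by nlinarith [sq_nonneg t])
  · have ht : 1 ≤ |t| ^ 2 * (3 * κ) :=
      (div_le_iff₀ (by positivity)).1 ((sqrt_le_left (abs_nonneg t)).1 (not_lt.1 h))
    have hden : 2 ≤ 3 * √(2 * κ) * |t| := by
      nlinarith [sq_sqrt (show 0 ≤ 2 * κ by positivity),
        mul_nonneg (sqrt_nonneg (2 * κ)) (abs_nonneg t)]
    have hsqrt : √(1 / 6) ≤ 1 / 2 := sqrt_le_iff.2 ⟨by norm_num, by norm_num⟩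
    linarith [one_div_le_one_div_of_le two_pos hden]

lemma measurable_gfun (κ : ℝ) : Measurable (gfun κ) :=
  Measurable.ite (measurableSet_lt (by fun_prop) measurable_const) (by fun_prop) (by fun_prop)

lemma intervalIntegrable_gfun {κ : ℝ} (hκ : 0 < κ) (a b : ℝ) :
    IntervalIntegrable (gfun κ) volume a b :=
  intervalIntegrable_const.mono_fun' (measurable_gfun κ).aestronglyMeasurable
    (ae_of_all _ fun t => by simpa [abs_of_pos (gfun_pos hκ t)] using gfun_le_one hκ t)

lemma Gfun_Ginv {κ : ℝ} (hκ : 0 < κ) (t : ℝ) : Gfun κ (Ginv κ t) = t :=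
  Function.invFun_eq (surjective_primitive (intervalIntegrable_gfun hκ) (sqrt_pos.2 (by norm_num))
    (sqrt_one_sixth_le_gfun hκ) t)

lemma le_Ginv {κ : ℝ} (hκ : 0 < κ) {t : ℝ} (ht : 0 < t) : t ≤ Ginv κ t :=
  le_of_primitive_eq (intervalIntegrable_gfun hκ) (fun s => (gfun_pos hκ s).le) (gfun_le_one hκ) ht
    (Gfun_Ginv hκ t)

theorem stmt_18_general (N : ℕ) (f : ℝ → ℝ)
    (hf1 : ContDiffOn ℝ 1 f (Set.Ici (0 : ℝ)))
    (hfpos : ∀ s : ℝ, 0 < s → 0 < f s)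
    (β μ₂ : ℝ)
    (hβ : 2 < β ∧ β < 2 * N / (N - 2))
    (hμ₂ : 0 < μ₂)
    (hdinf : Tendsto (fun t : ℝ => deriv f t / t ^ (β - 2)) atTop
      (𝓝 (μ₂ * (β - 1))))
    (κ : ℝ) (hκ : 0 < κ) :
    Tendsto (fun t : ℝ => f (Ginv κ t) / (t * gfun κ (Ginv κ t))) atTop atTop := by
  have hdiff : ∀ᶠ x in atTop, DifferentiableAt ℝ f x := by
    filter_upwards [eventually_gt_atTop 0] with x hx
    exact (hf1.contDiffAt (Ici_mem_nhds hx)).differentiableAt one_ne_zero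
  have hderiv : Tendsto (deriv f) atTop atTop :=
    tendsto_atTop_of_tendsto_div_rpow (by linarith [hβ.1])
      (mul_pos hμ₂ (by linarith [hβ.1])) hdinf
  have hsuperlinear := tendsto_div_self_atTop_of_tendsto_deriv hdiff hderiv
  have hGinv : Tendsto (Ginv κ) atTop atTop :=
    tendsto_atTop_mono' _ (eventually_gt_atTop 0 |>.mono fun t ht => le_Ginv hκ ht) tendsto_id
  refine tendsto_atTop_mono' _ ?_ (hsuperlinear.comp hGinv)
  filter_upwards [eventually_gt_atTop 0] with t ht
  have hs : t ≤ Ginv κ t := le_Ginv hκ ht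
  have hg := gfun_le_one hκ (Ginv κ t)
  exact div_le_div_of_nonneg_left (hfpos _ (ht.trans_le hs)).le
    (mul_pos ht (gfun_pos hκ _)) (by nlinarith)

/-- under (F1)-(F2), `f (G⁻¹ t) / (t * g (G⁻¹ t)) → +∞` as `t → +∞`. -/
theorem stmt_18 (N : ℕ) (hN : 3 ≤ N) (f : ℝ → ℝ)
    (hf1 : ContDiffOn ℝ 1 f (Set.Ici (0 : ℝ))) (hf0 : f 0 = 0)
    (hfpos : ∀ s : ℝ, 0 < s → 0 < f s)
    (α β μ₁ μ₂ : ℝ)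
    (hα : 2 < α ∧ α < 2 * N / (N - 2)) (hβ : 2 < β ∧ β < 2 * N / (N - 2))
    (hμ₁ : 0 < μ₁) (hμ₂ : 0 < μ₂)
    (hd0 : Tendsto (fun t : ℝ => deriv f t / t ^ (α - 2)) (𝓝[>] (0 : ℝ))
      (𝓝 (μ₁ * (α - 1))))
    (hdinf : Tendsto (fun t : ℝ => deriv f t / t ^ (β - 2)) atTop
      (𝓝 (μ₂ * (β - 1))))
    (κ : ℝ) (hκ : 0 < κ) :
    Tendsto (fun t : ℝ => f (Ginv κ t) / (t * gfun κ (Ginv κ t))) atTop atTop :=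
  stmt_18_general N f hf1 hfpos β μ₂ hβ hμ₂ hdinf κ hκ
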